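/- arXiv:1403.7922 — 2 statements merged into one kernel-verified Lean document; each statement's English description precedes it below -/
import Mathlib

section
/- Let m be even and let f : F_2^m → F_2^m be a weakly APN permutation with f(0) = 0. Then the number of nonzero v ∈ F_2^m such that the component ⟨f, v⟩ is partially bent is at most (2^m − 1)/3. In particular, not all components of f are partially bent. -/
/-- `F_2^m` as the space of binary vectors of length `m`. -/
abbrev BV (m : ℕ) := Fin m → ZMod 2

/-- The derivative of `f` in direction `a` : `f̂_a(x) = f(x+a) + f(x)`. -/
def der {m : ℕ} (f : BV m → BV m) (a : BV m) : BV m → BV m := fun x => f (x + a) + f x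

/-- `f` is weakly APN: `|Im(f̂_a)| > 2^(m-2)` for all `a ≠ 0`. -/
def WeakAPN {m : ℕ} (f : BV m → BV m) : Prop :=
  ∀ a : BV m, a ≠ 0 → 2 ^ (m - 2) < Nat.card (Set.range (der f a))

/-- Standard dot product over `F_2`; `⟨g, v⟩ = fun x => dotp v (g x)` is the `v`-component. -/
def dotp {m : ℕ} (v w : BV m) : ZMod 2 := ∑ i, v i * w i

/-- A Boolean function `S` is partially bent: there are subspaces `U, V` with
`F_2^m = U ⊕ V` such that the restriction of `S` to `V` is affine, the restriction of `S`
to `U` is bent (every nonzero derivative in a direction from `U` is balanced on `U`), and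
`S(y+z) = S(y) + S(z) + S(0)` for all `y ∈ U`, `z ∈ V`. -/
def PartiallyBent {m : ℕ} (S : BV m → ZMod 2) : Prop :=
  ∃ U V : Submodule (ZMod 2) (BV m),
    U ⊓ V = ⊥ ∧ U ⊔ V = ⊤ ∧
    (∃ (L : BV m →ₗ[ZMod 2] ZMod 2) (c : ZMod 2), ∀ z ∈ V, S z = L z + c) ∧
    (∀ a ∈ U, a ≠ 0 → ∀ b : ZMod 2,
      2 * Nat.card {x : BV m // x ∈ U ∧ S ((x : BV m) + a) + S x = b} = Nat.card U) ∧
    (∀ y ∈ U, ∀ z ∈ V, S (y + z) = S y + S z + S 0)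

/-! ### Auxiliary lemmas -/

open Finset

lemma zmod2_cases (b : ZMod 2) : b = 0 ∨ b = 1 := by revert b; decide

lemma zmod2_add_eq_zero (u w : ZMod 2) : u + w = 0 ↔ u = w := by
  revert u w; decide

/-- dot product as a linear map in the second variable -/
def dotL {m : ℕ} (v : BV m) : BV m →ₗ[ZMod 2] ZMod 2 where
  toFun w := dotp v w
  map_add' x y := by simp [dotp, mul_add, Finset.sum_add_distrib]
  map_smul' c x := by simp [dotp, Finset.mul_sum, mul_left_comm]

lemma dotp_single {m : ℕ} (v : BV m) (i : Fin m) : dotp v (Pi.single i 1) = v i := by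
  unfold dotp
  rw [Finset.sum_eq_single i]
  · simp
  · intro j _ hj; simp [Pi.single_apply, hj]
  · simp

lemma exists_dot_one {m : ℕ} (v : BV m) (hv : v ≠ 0) : ∃ y, dotp v y = 1 := by
  have : ∃ i, v i ≠ 0 := by
    by_contra hc
    push_neg at hc
    exact hv (funext fun i => hc i)
  obtain ⟨i, hi⟩ := this
  have hvi : v i = 1 := by
    rcases zmod2_cases (v i) with h | h
    · exact absurd h hi
    · exact h
  exact ⟨Pi.single i 1, by rw [dotp_single, hvi]⟩

lemma dotL_surj {m : ℕ} (v : BV m) (hv : v ≠ 0) : Function.Surjective (dotL v) := by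
  obtain ⟨y, hy⟩ := exists_dot_one v hv
  intro b
  rcases zmod2_cases b with rfl | rfl
  · exact ⟨0, map_zero _⟩
  · exact ⟨y, hy⟩

lemma card_BV (m : ℕ) : Fintype.card (BV m) = 2 ^ m := by
  simp [Fintype.card_fun]

lemma fiber_card {m : ℕ} {W : Type} [AddCommGroup W] [Module (ZMod 2) W] [Fintype W]
    [DecidableEq W] (φ : BV m →ₗ[ZMod 2] W) (hs : Function.Surjective φ) (b : W) :
    Fintype.card {x : BV m // φ x = b} * Fintype.card W = 2 ^ m := by
  classical
  have key : ∀ c : W, Fintype.card {x : BV m // φ x = c} = Fintype.card {x : BV m // φ x = b} := by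
    intro c
    obtain ⟨yb, hyb⟩ := hs b
    obtain ⟨yc, hyc⟩ := hs c
    apply Fintype.card_congr
    refine ⟨fun x => ⟨x.1 + (yb - yc), ?_⟩, fun x => ⟨x.1 + (yc - yb), ?_⟩, ?_, ?_⟩
    · rw [map_add, map_sub, x.2, hyb, hyc]; abel
    · rw [map_add, map_sub, x.2, hyb, hyc]; abel
    · intro x; apply Subtype.ext; dsimp; abel
    · intro x; apply Subtype.ext; dsimp; abel
  have h1 : Fintype.card (BV m) = ∑ c : W, Fintype.card {x : BV m // φ x = c} :=
    (Fintype.card_congr (Equiv.sigmaFiberEquiv (fun x : BV m => φ x)).symm).trans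
      Fintype.card_sigma
  rw [card_BV] at h1
  rw [h1, Finset.sum_congr rfl fun c _ => key c, Finset.sum_const, Finset.card_univ, smul_eq_mul,
    mul_comm]

lemma bent_key {A : Type} [AddCommGroup A] [Fintype A] [DecidableEq A] (g : A → ZMod 2) (k : ℕ)
    (hcard : Fintype.card A = 2 ^ k)
    (hbent : ∀ a : A, a ≠ 0 → 2 * Fintype.card {x : A // g (x + a) + g x = 0} = 2 ^ k) :
    ((Fintype.card {x : A // g x = 0} : ℤ) - (Fintype.card {x : A // g x = 1} : ℤ)) ^ 2
      = 2 ^ k := by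
  classical
  set n0 := (univ.filter fun x : A => g x = 0).card with hn0
  set n1 := (univ.filter fun x : A => g x = 1).card with hn1
  have hsub0 : Fintype.card {x : A // g x = 0} = n0 := Fintype.card_subtype _
  have hsub1 : Fintype.card {x : A // g x = 1} = n1 := Fintype.card_subtype _
  set N : A → ℕ := fun a => (univ.filter fun x : A => g (x + a) = g x).card with hN
  have step1 : ∑ a : A, N a = n0 * n0 + n1 * n1 := by
    have swap : ∀ x : A, (∑ a : A, if g (x + a) = g x then 1 else 0)
        = (univ.filter fun y : A => g y = g x).card := by
      intro x
      rw [card_filter]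
      exact Fintype.sum_equiv (Equiv.addLeft x) _ _ (fun a => by simp; congr)
    calc ∑ a : A, N a = ∑ a : A, ∑ x : A, if g (x + a) = g x then 1 else 0 :=
          Finset.sum_congr rfl fun a _ => by rw [hN]; exact card_filter _ _
      _ = ∑ x : A, ∑ a : A, if g (x + a) = g x then 1 else 0 := Finset.sum_comm
      _ = ∑ x : A, (univ.filter fun y : A => g y = g x).card := by
          exact Finset.sum_congr rfl fun x _ => swap x
      _ = n0 * n0 + n1 * n1 := by
          rw [← Finset.sum_filter_add_sum_filter_not univ (fun x : A => g x = 0)]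
          have h0 : ∀ x ∈ univ.filter (fun x : A => g x = 0),
              (univ.filter fun y : A => g y = g x).card = n0 := by
            intro x hx
            simp only [mem_filter] at hx
            rw [hx.2]
          have h1 : ∀ x ∈ univ.filter (fun x : A => ¬ g x = 0),
              (univ.filter fun y : A => g y = g x).card = n1 := by
            intro x hx
            simp only [mem_filter] at hx
            have : g x = 1 := by
              rcases zmod2_cases (g x) with h | h
              · exact absurd h hx.2
              · exact h
            rw [this]
          rw [Finset.sum_congr rfl h0, Finset.sum_congr rfl h1, Finset.sum_const,
            Finset.sum_const, smul_eq_mul, smul_eq_mul]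
          have : (univ.filter fun x : A => ¬ g x = 0) = univ.filter fun x : A => g x = 1 := by
            apply Finset.filter_congr
            intro x _
            constructor
            · intro hx
              rcases zmod2_cases (g x) with h | h
              · exact absurd h hx
              · exact h
            · intro hx; rw [hx]; exact one_ne_zero
          rw [this]
  have hNbent : ∀ a : A, a ≠ 0 → 2 * N a = 2 ^ k := by
    intro a ha
    have := hbent a ha
    have key : Fintype.card {x : A // g (x + a) + g x = 0} = N a := by
      have h2 : N a = Fintype.card {x : A // g (x + a) = g x} := by
        simp only [hN]
        exact (Fintype.card_subtype _).symm
      rw [h2]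
      exact Fintype.card_congr
        (Equiv.subtypeEquivRight fun x => (zmod2_add_eq_zero (g (x + a)) (g x)))
    rwa [key] at this
  have hN0 : N 0 = 2 ^ k := by
    simp only [hN, add_zero]
    rw [Finset.filter_true, Finset.card_univ, hcard]
  have step2 : 2 * ∑ a : A, N a = 2 * 2 ^ k + (2 ^ k - 1) * 2 ^ k := by
    rw [← Finset.add_sum_erase univ N (Finset.mem_univ 0), Nat.mul_add, hN0]
    congr 1
    rw [Finset.mul_sum]
    rw [Finset.sum_congr rfl (fun a ha => hNbent a (Finset.ne_of_mem_erase ha))]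
    rw [Finset.sum_const, smul_eq_mul, Finset.card_erase_of_mem (Finset.mem_univ 0),
      Finset.card_univ, hcard]
  have step3 : n0 + n1 = 2 ^ k := by
    rw [hn0, hn1, ← hcard, ← Finset.card_univ]
    rw [show (univ.filter fun x : A => g x = 1) = univ.filter (fun x : A => ¬ g x = 0) by
      apply Finset.filter_congr
      intro x _
      constructor
      · intro hx; rw [hx]; exact one_ne_zero
      · intro hx
        rcases zmod2_cases (g x) with h | h
        · exact absurd h hx
        · exact h]
    exact Finset.card_filter_add_card_filter_not _
  rw [hsub0, hsub1]
  have e1 : 2 * (n0 * n0 + n1 * n1) = 2 * 2 ^ k + (2 ^ k - 1) * 2 ^ k := by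
    rw [← step1]; exact step2
  have h2k : (1 : ℕ) ≤ 2 ^ k := Nat.one_le_two_pow
  have e1' : 2 * ((n0 : ℤ) * n0 + n1 * n1) = 2 * 2 ^ k + (2 ^ k - 1) * 2 ^ k := by
    have := congrArg (Nat.cast : ℕ → ℤ) e1
    push_cast [Nat.cast_sub h2k] at this
    linarith [this]
  have e3' : (n0 : ℤ) + n1 = 2 ^ k := by exact_mod_cast step3
  linear_combination e1' - ((n0 : ℤ) + n1 + 2 ^ k) * e3'

lemma even_of_int_sq_eq_two_pow (d : ℤ) (k : ℕ) (h : d ^ 2 = 2 ^ k) : Even k := by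
  have hj : d.natAbs ^ 2 = 2 ^ k := by
    have := congrArg Int.natAbs h
    rwa [Int.natAbs_pow, show ((2 : ℤ) ^ k).natAbs = 2 ^ k by
      rw [Int.natAbs_pow]; rfl] at this
  have hdvd : d.natAbs ∣ 2 ^ k := by
    rw [← hj]; exact dvd_pow_self _ (by norm_num)
  obtain ⟨i, hik, hieq⟩ := (Nat.dvd_prime_pow Nat.prime_two).mp hdvd
  rw [hieq, ← pow_mul] at hj
  have : i * 2 = k := Nat.pow_right_injective (le_refl 2) hj
  exact ⟨i, by omega⟩

/-- The key structure lemma: a balanced partially bent function on `F_2^m`, `m` even,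
has a "linear space" of size at least 4 on which all derivatives are constant. -/
lemma pb_structure {m : ℕ} (hm : 2 ≤ m) (hme : Even m) (S : BV m → ZMod 2)
    (hbal : Fintype.card {x : BV m // S x = 0} = Fintype.card {x : BV m // S x = 1})
    (hPB : PartiallyBent S) :
    ∃ V : Submodule (ZMod 2) (BV m), 4 ≤ Nat.card V ∧
      ∀ a ∈ V, ∃ c : ZMod 2, ∀ x, S (x + a) + S x = c := by
  classical
  obtain ⟨U, V, hUV, hUVtop, ⟨L, c, hL⟩, hbent, hadd⟩ := hPB
  have two0 : (2 : ZMod 2) = 0 := rfl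
  -- derivatives in directions from V are constant
  have hconst : ∀ a ∈ V, ∀ x, S (x + a) + S x = L a := by
    intro a haV x
    have hx : x ∈ U ⊔ V := by rw [hUVtop]; trivial
    obtain ⟨y, hy, z, hz, rfl⟩ := Submodule.mem_sup.mp hx
    have h1 : S (y + z + a) = S y + S (z + a) + S 0 := by
      rw [show y + z + a = y + (z + a) by abel]
      exact hadd y hy (z + a) (V.add_mem hz haV)
    have h2 : S (y + z) = S y + S z + S 0 := hadd y hy z hz
    rw [h1, h2, hL _ (V.add_mem hz haV), hL _ hz, map_add]
    linear_combination (S y + L z + c + S 0) * two0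
  haveI : Fintype ↥U := Fintype.ofFinite _
  haveI : Fintype ↥V := Fintype.ofFinite _
  set k := Module.finrank (ZMod 2) ↥U with hk
  have hUcard : Fintype.card ↥U = 2 ^ k := by
    have := Module.card_eq_pow_finrank (K := ZMod 2) (V := ↥U)
    rwa [ZMod.card] at this
  set g : ↥U → ZMod 2 := fun x => S x with hg
  have hbent' : ∀ a : ↥U, a ≠ 0 → 2 * Fintype.card {x : ↥U // g (x + a) + g x = 0} = 2 ^ k := by
    intro a ha
    have hane : (a : BV m) ≠ 0 := fun hc => ha (Subtype.ext hc)
    have hb := hbent a a.2 hane 0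
    have hcardeq : Nat.card {x : BV m // x ∈ U ∧ S (x + (a : BV m)) + S x = 0}
        = Fintype.card {x : ↥U // g (x + a) + g x = 0} := by
      rw [← Nat.card_eq_fintype_card]
      apply Nat.card_congr
      exact ((Equiv.subtypeSubtypeEquivSubtypeInter (· ∈ U)
        (fun x => S (x + (a : BV m)) + S x = 0)).symm.trans
        (Equiv.subtypeEquivRight fun x => by simp [hg]))
    rw [hcardeq] at hb
    rw [hb, Nat.card_eq_fintype_card, hUcard]
  have hd := bent_key g k hUcard hbent'
  have hkeven : Even k := even_of_int_sq_eq_two_pow _ k hd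
  -- V ≠ ⊥
  have hVne : V ≠ ⊥ := by
    intro hVbot
    rw [hVbot, sup_bot_eq] at hUVtop
    have e0 : Fintype.card {x : ↥U // g x = 0} = Fintype.card {x : BV m // S x = 0} :=
      Fintype.card_congr ⟨fun x => ⟨x.1.1, x.2⟩,
        fun x => ⟨⟨x.1, by rw [hUVtop]; trivial⟩, x.2⟩, fun x => rfl, fun x => rfl⟩
    have e1 : Fintype.card {x : ↥U // g x = 1} = Fintype.card {x : BV m // S x = 1} :=
      Fintype.card_congr ⟨fun x => ⟨x.1.1, x.2⟩,
        fun x => ⟨⟨x.1, by rw [hUVtop]; trivial⟩, x.2⟩, fun x => rfl, fun x => rfl⟩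
    rw [e0, e1, hbal, sub_self] at hd
    have : (0 : ℤ) = 2 ^ k := by rw [← hd]; ring
    have := pow_pos (by norm_num : (0:ℤ) < 2) k
    omega
  -- dimension count
  have hcompl : IsCompl U V := ⟨disjoint_iff.mpr hUV, codisjoint_iff.mpr hUVtop⟩
  have hsum : k + Module.finrank (ZMod 2) ↥V = m := by
    have := Submodule.finrank_add_eq_of_isCompl hcompl
    rwa [Module.finrank_pi, Fintype.card_fin] at this
  have hVrank : 2 ≤ Module.finrank (ZMod 2) ↥V := by
    have hne0 : Module.finrank (ZMod 2) ↥V ≠ 0 := by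
      intro h0
      exact hVne (Submodule.finrank_eq_zero.mp h0)
    have heven : Even (Module.finrank (ZMod 2) ↥V) := by
      obtain ⟨tk, htk⟩ := hkeven
      obtain ⟨tm, htm⟩ := hme
      exact ⟨tm - tk, by omega⟩
    obtain ⟨t, ht⟩ := heven
    omega
  have hVcard : 4 ≤ Nat.card ↥V := by
    have : Fintype.card ↥V = 2 ^ Module.finrank (ZMod 2) ↥V := by
      have := Module.card_eq_pow_finrank (K := ZMod 2) (V := ↥V)
      rwa [ZMod.card] at this
    rw [Nat.card_eq_fintype_card, this]
    calc (4 : ℕ) = 2 ^ 2 := rfl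
      _ ≤ 2 ^ Module.finrank (ZMod 2) ↥V := Nat.pow_le_pow_right (by norm_num) hVrank
  exact ⟨V, hVcard, fun a ha => ⟨L a, hconst a ha⟩⟩

lemma dotp_add {m : ℕ} (v x y : BV m) : dotp v (x + y) = dotp v x + dotp v y :=
  (dotL v).map_add x y

lemma dotp_smul {m : ℕ} (v : BV m) (b : ZMod 2) (y : BV m) :
    dotp v (b • y) = b * dotp v y := (dotL v).map_smul b y

lemma comp_balanced {m : ℕ} (f : BV m → BV m) (hperm : Function.Bijective f) (v : BV m)
    (hv : v ≠ 0) :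
    Fintype.card {x : BV m // dotp v (f x) = 0}
      = Fintype.card {x : BV m // dotp v (f x) = 1} := by
  classical
  have e : ∀ b : ZMod 2, Fintype.card {x : BV m // dotp v (f x) = b}
      = Fintype.card {x : BV m // dotL v x = b} := fun b =>
    Fintype.card_congr (Equiv.subtypeEquiv (Equiv.ofBijective f hperm) (fun x => Iff.rfl))
  have h0 := fiber_card (dotL v) (dotL_surj v hv) 0
  have h1 := fiber_card (dotL v) (dotL_surj v hv) 1
  rw [e 0, e 1]
  have hc2 : Fintype.card (ZMod 2) = 2 := rfl
  rw [hc2] at h0 h1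
  omega

lemma prod_surj {m : ℕ} (v w : BV m) (hv : v ≠ 0) (hw : w ≠ 0) (hvw : v ≠ w) :
    Function.Surjective ((dotL v).prod (dotL w)) := by
  have hp : ∃ p, dotp v p ≠ dotp w p := by
    by_contra hc
    push_neg at hc
    apply hvw
    funext i
    have := hc (Pi.single i 1)
    rwa [dotp_single, dotp_single] at this
  obtain ⟨p, hp⟩ := hp
  obtain ⟨q, hq⟩ := exists_dot_one v hv
  obtain ⟨r, hr⟩ := exists_dot_one w hw
  have key : ∃ x10 x01, (dotp v x10 = 1 ∧ dotp w x10 = 0)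
      ∧ (dotp v x01 = 0 ∧ dotp w x01 = 1) := by
    rcases zmod2_cases (dotp v p) with h1 | h1 <;> rcases zmod2_cases (dotp w p) with h2 | h2
    · exact absurd (h1.trans h2.symm) hp
    · -- φ p = (0,1)
      rcases zmod2_cases (dotp w q) with h3 | h3
      · exact ⟨q, p, ⟨hq, h3⟩, ⟨h1, h2⟩⟩
      · refine ⟨q + p, p, ⟨?_, ?_⟩, ⟨h1, h2⟩⟩
        · rw [dotp_add, hq, h1]; decide
        · rw [dotp_add, h3, h2]; decide
    · -- φ p = (1,0)
      rcases zmod2_cases (dotp v r) with h3 | h3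
      · exact ⟨p, r, ⟨h1, h2⟩, ⟨h3, hr⟩⟩
      · refine ⟨p, r + p, ⟨h1, h2⟩, ⟨?_, ?_⟩⟩
        · rw [dotp_add, h3, h1]; decide
        · rw [dotp_add, hr, h2]; decide
    · exact absurd (h1.trans h2.symm) hp
  obtain ⟨x10, x01, ⟨hv10, hw10⟩, ⟨hv01, hw01⟩⟩ := key
  rintro ⟨b1, b2⟩
  refine ⟨b1 • x10 + b2 • x01, ?_⟩
  have hval : ∀ y : BV m, ((dotL v).prod (dotL w)) y = (dotp v y, dotp w y) := fun y => rfl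
  rw [hval]
  have e1 : dotp v (b1 • x10 + b2 • x01) = b1 := by
    rw [dotp_add, dotp_smul, dotp_smul, hv10, hv01]; ring
  have e2 : dotp w (b1 • x10 + b2 • x01) = b2 := by
    rw [dotp_add, dotp_smul, dotp_smul, hw10, hw01]; ring
  rw [e1, e2]

lemma no_two_const {m : ℕ} (hm : 2 ≤ m) (f : BV m → BV m) (h : WeakAPN f) {a v w : BV m}
    (ha : a ≠ 0) (hv : v ≠ 0) (hw : w ≠ 0) (hvw : v ≠ w) {cv cw : ZMod 2}
    (hcv : ∀ x, dotp v (f (x + a)) + dotp v (f x) = cv)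
    (hcw : ∀ x, dotp w (f (x + a)) + dotp w (f x) = cw) : False := by
  classical
  set φ := (dotL v).prod (dotL w) with hφ
  have hs := prod_surj v w hv hw hvw
  have hfib := fiber_card φ hs (cv, cw)
  have hW : Fintype.card (ZMod 2 × ZMod 2) = 4 := rfl
  rw [hW] at hfib
  have hfc : Fintype.card {x : BV m // φ x = (cv, cw)} = 2 ^ (m - 2) := by
    have h4 : 2 ^ (m - 2) * 4 = 2 ^ m := by
      rw [show m = (m - 2) + 2 by omega, pow_add]
      simp [Nat.pow_succ]
    omega
  have hsub : Set.range (der f a) ⊆ {y : BV m | φ y = (cv, cw)} := by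
    rintro _ ⟨x, rfl⟩
    show φ (der f a x) = (cv, cw)
    have h1 : dotp v (der f a x) = cv := by
      rw [← hcv x]
      exact dotp_add v _ _
    have h2 : dotp w (der f a x) = cw := by
      rw [← hcw x]
      exact dotp_add w _ _
    have : φ (der f a x) = (dotp v (der f a x), dotp w (der f a x)) := rfl
    rw [this, h1, h2]
  have hle : Nat.card (Set.range (der f a)) ≤ Nat.card {y : BV m | φ y = (cv, cw)} :=
    Nat.card_mono (Set.toFinite _) hsub
  have hset : Nat.card {y : BV m | φ y = (cv, cw)} = 2 ^ (m - 2) := by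
    rw [← hfc, ← Nat.card_eq_fintype_card]
    exact Nat.card_congr (Equiv.subtypeEquivRight fun x => Iff.rfl)
  have := h a ha
  omega

/-- For `m` even, a weakly APN permutation of `F_2^m` has at most `(2^m - 1)/3` partially
bent components; in particular not all of its components are partially bent. -/
theorem stmt_13 (m : ℕ) (hm : 1 ≤ m) (hme : Even m) (f : BV m → BV m)
    (hperm : Function.Bijective f) (hf0 : f 0 = 0) (h : WeakAPN f) :
    Nat.card {v : BV m // v ≠ 0 ∧ PartiallyBent (fun x => dotp v (f x))} ≤ (2 ^ m - 1) / 3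
    ∧ ¬ ∀ v : BV m, v ≠ 0 → PartiallyBent (fun x => dotp v (f x)) := by
  classical
  have hm2 : 2 ≤ m := by
    obtain ⟨t, ht⟩ := hme
    omega
  set P : Finset (BV m) :=
    univ.filter (fun v => v ≠ 0 ∧ PartiallyBent (fun x => dotp v (f x))) with hP
  set A : BV m → Finset (BV m) := fun v =>
    univ.filter (fun a => a ≠ 0 ∧ ∃ c : ZMod 2,
      ∀ x, dotp v (f (x + a)) + dotp v (f x) = c) with hA
  have hcard3 : ∀ v ∈ P, 3 ≤ (A v).card := by
    intro v hvP
    rw [hP, mem_filter] at hvP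
    obtain ⟨-, hv0, hPB⟩ := hvP
    obtain ⟨V, hV4, hVconst⟩ := pb_structure hm2 hme (fun x => dotp v (f x))
      (comp_balanced f hperm v hv0) hPB
    have hVF : ((V : Set (BV m)).toFinset.erase 0) ⊆ A v := by
      intro a ha
      rw [Finset.mem_erase, Set.mem_toFinset] at ha
      obtain ⟨ha0, haV⟩ := ha
      rw [hA, mem_filter]
      obtain ⟨c, hc⟩ := hVconst a haV
      exact ⟨mem_univ a, ha0, c, hc⟩
    have hVcard : 4 ≤ (V : Set (BV m)).toFinset.card := by
      rw [Set.toFinset_card, ← Nat.card_eq_fintype_card]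
      exact le_trans hV4 (le_of_eq (Nat.card_congr (Equiv.subtypeEquivRight fun _ => Iff.rfl)))
    calc (3 : ℕ) ≤ (V : Set (BV m)).toFinset.card - 1 := by omega
      _ ≤ ((V : Set (BV m)).toFinset.erase 0).card := by
          rw [Finset.card_erase_of_mem (by rw [Set.mem_toFinset]; exact V.zero_mem)]
      _ ≤ (A v).card := Finset.card_le_card hVF
  have hdisj : ∀ v ∈ P, ∀ w ∈ P, v ≠ w → Disjoint (A v) (A w) := by
    intro v hvP w hwP hvw
    rw [hP, mem_filter] at hvP hwP
    rw [Finset.disjoint_left]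
    intro a hav haw
    rw [hA, mem_filter] at hav haw
    obtain ⟨-, ha0, cv, hcv⟩ := hav
    obtain ⟨-, -, cw, hcw⟩ := haw
    exact absurd (no_two_const hm2 f h ha0 hvP.2.1 hwP.2.1 hvw hcv hcw) (not_false)
  have hsum : P.card * 3 ≤ 2 ^ m - 1 := by
    calc P.card * 3 = P.card • 3 := by rw [smul_eq_mul]
      _ ≤ ∑ v ∈ P, (A v).card := Finset.card_nsmul_le_sum P _ 3 hcard3
      _ = (P.biUnion A).card := (Finset.card_biUnion hdisj).symm
      _ ≤ ((univ : Finset (BV m)).erase 0).card := by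
          apply Finset.card_le_card
          intro a ha
          rw [Finset.mem_biUnion] at ha
          obtain ⟨v, -, hav⟩ := ha
          rw [hA, mem_filter] at hav
          exact Finset.mem_erase.mpr ⟨hav.2.1, mem_univ a⟩
      _ = 2 ^ m - 1 := by
          rw [Finset.card_erase_of_mem (mem_univ 0), Finset.card_univ, card_BV]
  have hcardP : Nat.card {v : BV m // v ≠ 0 ∧ PartiallyBent (fun x => dotp v (f x))}
      = P.card := by
    rw [Nat.card_eq_fintype_card, hP]
    convert Fintype.card_subtype _ using 2
  have part1 : Nat.card {v : BV m // v ≠ 0 ∧ PartiallyBent (fun x => dotp v (f x))}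
      ≤ (2 ^ m - 1) / 3 := by
    rw [hcardP, Nat.le_div_iff_mul_le (by norm_num : 0 < 3)]
    exact hsum
  refine ⟨part1, ?_⟩
  intro hall
  have hPeq : P = (univ : Finset (BV m)).erase 0 := by
    rw [hP]
    ext v
    rw [mem_filter, Finset.mem_erase]
    constructor
    · rintro ⟨h1, h2, -⟩; exact ⟨h2, h1⟩
    · rintro ⟨h1, h2⟩; exact ⟨h2, h1, hall v h1⟩
  have h4m : 4 ≤ 2 ^ m := by
    calc (4 : ℕ) = 2 ^ 2 := rfl
      _ ≤ 2 ^ m := Nat.pow_le_pow_right (by norm_num) hm2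
  have : P.card = 2 ^ m - 1 := by
    rw [hPeq, Finset.card_erase_of_mem (mem_univ 0), Finset.card_univ, card_BV]
  omega
end

section
/- Let f : F_2^4 → F_2^4 be a weakly APN permutation with n_3(f) = 14. Then n̂(f) = 1. -/
/-- `n̂(f)`: the maximum over nonzero `a` of the number of nonzero `v` such that the
component `⟨f̂_a, v⟩` is a constant function. -/
noncomputable def nhat {m : ℕ} (f : BV m → BV m) : ℕ :=
  Finset.sup (Finset.univ.filter fun a : BV m => a ≠ 0) fun a =>
    Nat.card {v : BV m // v ≠ 0 ∧ ∃ c, ∀ x, dotp v (der f a x) = c}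

/-- Algebraic degree of a Boolean function, via its algebraic normal form: the degree is the
maximal size of a monomial `∏_{i ∈ S} x_i` appearing with nonzero (Möbius) coefficient
`∑_{x : supp x ⊆ S} g x` in the unique reduced multilinear polynomial representing `g`. -/
def algDeg {m : ℕ} (g : BV m → ZMod 2) : ℕ :=
  Finset.sup (Finset.univ.filter fun S : Finset (Fin m) =>
    (∑ x ∈ Finset.univ.filter (fun x : BV m => ∀ i, x i ≠ 0 → i ∈ S), g x) ≠ 0)
    Finset.card

/-- `n_3(f)`: the number of nonzero `v` whose component `⟨f, v⟩` has algebraic degree 3. -/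
noncomputable def n3 {m : ℕ} (f : BV m → BV m) : ℕ :=
  Nat.card {v : BV m // v ≠ 0 ∧ algDeg (fun x => dotp v (f x)) = 3}

/-! ### Auxiliary material -/

/-- The sign `(-1)^b` of a bit. -/
def eps (b : ZMod 2) : ℤ := 1 - 2 * b.val

lemma eps_add (a b : ZMod 2) : eps (a + b) = eps a * eps b := by revert a b; decide

/-- The `j`-th standard basis vector. -/
def sgl (j : Fin 4) : BV 4 := fun k => if k = j then 1 else 0

lemma zmod2_ne (b : ZMod 2) (h : b ≠ 0) : b = 1 := by revert b; decide

lemma dotp_add_right {m : ℕ} (u y z : BV m) : dotp u (y + z) = dotp u y + dotp u z := by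
  unfold dotp; rw [← Finset.sum_add_distrib]; apply Finset.sum_congr rfl
  intro i _; simp [Pi.add_apply, mul_add]

lemma dotp_add_left {m : ℕ} (u v y : BV m) : dotp (u + v) y = dotp u y + dotp v y := by
  unfold dotp; rw [← Finset.sum_add_distrib]; apply Finset.sum_congr rfl
  intro i _; simp [Pi.add_apply, add_mul]

lemma dotp_sgl (u : BV 4) (j : Fin 4) : dotp u (sgl j) = u j := by
  unfold dotp sgl
  rw [Finset.sum_eq_single j] <;> simp +contextual

/-- Character sum of a nontrivial linear functional vanishes. -/
lemma sum_eps_dotp (u : BV 4) (hu : u ≠ 0) : ∑ y : BV 4, eps (dotp u y) = 0 := by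
  obtain ⟨j, hj⟩ := Function.ne_iff.mp hu
  have hj1 : u j = 1 := zmod2_ne _ hj
  have key : ∑ y : BV 4, eps (dotp u y) = ∑ y : BV 4, eps (dotp u (y + sgl j)) :=
    (Equiv.sum_comp (Equiv.addRight (sgl j)) (fun y => eps (dotp u y))).symm
  have eps_one : eps 1 = -1 := by decide
  simp_rw [dotp_add_right, dotp_sgl, hj1, eps_add, eps_one, mul_neg_one,
    Finset.sum_neg_distrib] at key
  linarith

/-- Upper bound: for weakly APN `f` there is at most one nonzero `v` making
`⟨f̂_a, v⟩` constant. -/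
lemma upper (f : BV 4 → BV 4) (h : WeakAPN f) (a : BV 4) (ha : a ≠ 0) :
    ∀ v w : BV 4, (v ≠ 0 ∧ ∃ c, ∀ x, dotp v (der f a x) = c) →
      (w ≠ 0 ∧ ∃ c, ∀ x, dotp w (der f a x) = c) → v = w := by
  rintro v w ⟨hv0, c, hv⟩ ⟨hw0, d, hw⟩
  by_contra hvw
  have huw : v + w ≠ 0 := by
    intro hz
    apply hvw
    funext i
    have : v i + w i = 0 := congrFun hz i
    revert this; generalize v i = p; generalize w i = q; revert p q; decide
  set Zf := Finset.univ.filter (fun y : BV 4 => dotp v y = c ∧ dotp w y = d) with hZf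
  have key : ∑ y : BV 4, ((1 + eps (dotp v y + c)) * (1 + eps (dotp w y + d)))
      = 4 * (Zf.card : ℤ) := by
    have pt : ∀ p q r s : ZMod 2,
        (1 + eps (p + r)) * (1 + eps (q + s)) = if p = r ∧ q = s then 4 else 0 := by decide
    simp_rw [pt]
    rw [← Finset.sum_filter, Finset.sum_const, nsmul_eq_mul]
    ring
  have expand : ∑ y : BV 4, ((1 + eps (dotp v y + c)) * (1 + eps (dotp w y + d))) = 16 := by
    have pt2 : ∀ p q r s : ZMod 2, (1 + eps (p + r)) * (1 + eps (q + s))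
        = 1 + eps r * eps p + eps s * eps q + (eps r * eps s) * eps (p + q) := by decide
    simp_rw [pt2, ← dotp_add_left]
    rw [Finset.sum_add_distrib, Finset.sum_add_distrib, Finset.sum_add_distrib,
      ← Finset.mul_sum, ← Finset.mul_sum, ← Finset.mul_sum,
      sum_eps_dotp v hv0, sum_eps_dotp w hw0, sum_eps_dotp (v + w) huw]
    simp
  have hcard : Zf.card = 4 := by rw [key] at expand; omega
  have hsub : Set.range (der f a) ⊆ (Zf : Set (BV 4)) := by
    rintro y ⟨x, rfl⟩
    simp only [hZf, Finset.coe_filter, Set.mem_setOf_eq, Finset.mem_univ, true_and]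
    exact ⟨hv x, hw x⟩
  have hle : Nat.card (Set.range (der f a)) ≤ 4 := by
    have h5 := Nat.card_mono (Set.toFinite _) hsub
    rw [Nat.card_coe_set_eq, Nat.card_coe_set_eq, Set.ncard_coe_finset, hcard] at h5
    rw [Nat.card_coe_set_eq]
    exact h5
  have hgt := h a ha
  have h24 : (2 : ℕ) ^ (4 - 2) = 4 := by norm_num
  rw [h24] at hgt
  omega

lemma kdelta (x y : BV 4) : ∑ S : Finset (Fin 4),
    (if (∀ i, y i ≠ 0 → i ∈ S) then ∏ i ∈ S, x i else 0) = if y = x then 1 else 0 := by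
  revert x y; decide

/-- Möbius inversion: a Boolean function equals its algebraic normal form. -/
lemma inv4 (g : BV 4 → ZMod 2) (x : BV 4) :
    ∑ S : Finset (Fin 4),
      (∑ y ∈ Finset.univ.filter (fun y : BV 4 => ∀ i, y i ≠ 0 → i ∈ S), g y) * ∏ i ∈ S, x i
    = g x := by
  have h1 : ∀ S : Finset (Fin 4),
      (∑ y ∈ Finset.univ.filter (fun y : BV 4 => ∀ i, y i ≠ 0 → i ∈ S), g y) * ∏ i ∈ S, x i
      = ∑ y : BV 4, g y * (if (∀ i, y i ≠ 0 → i ∈ S) then ∏ i ∈ S, x i else 0) := by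
    intro S
    rw [Finset.sum_mul, Finset.sum_filter]
    congr 1; ext y
    by_cases h : (∀ i, y i ≠ 0 → i ∈ S) <;> simp [h]
  simp_rw [h1]
  rw [Finset.sum_comm]
  have h2 : ∀ y : BV 4, ∑ S : Finset (Fin 4),
      g y * (if (∀ i, y i ≠ 0 → i ∈ S) then ∏ i ∈ S, x i else 0)
      = g y * (if y = x then 1 else 0) := by
    intro y; rw [← Finset.mul_sum, kdelta]
  simp_rw [h2]
  simp

/-- The third-order difference of a monomial of degree at most 2 vanishes. -/
lemma Mzero (S : Finset (Fin 4)) (hS : S.card ≤ 2) (a x y : BV 4) :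
    (∏ i ∈ S, (a + x + y) i) + (∏ i ∈ S, (a + x) i) + (∏ i ∈ S, (a + y) i)
    + (∏ i ∈ S, (x + y) i) + (∏ i ∈ S, a i) + (∏ i ∈ S, x i) + (∏ i ∈ S, y i)
    + (∏ i ∈ S, (0 : BV 4) i) = 0 := by
  interval_cases h : S.card
  · rw [Finset.card_eq_zero] at h; subst h; simp only [Finset.prod_empty]; decide
  · obtain ⟨i, rfl⟩ := Finset.card_eq_one.mp h
    simp only [Finset.prod_singleton, Pi.add_apply, Pi.zero_apply]
    generalize a i = A; generalize x i = X; generalize y i = Y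
    revert A X Y; decide
  · obtain ⟨i, j, hij, rfl⟩ := Finset.card_eq_two.mp h
    rw [Finset.prod_pair hij, Finset.prod_pair hij, Finset.prod_pair hij,
      Finset.prod_pair hij, Finset.prod_pair hij, Finset.prod_pair hij,
      Finset.prod_pair hij, Finset.prod_pair hij]
    simp only [Pi.add_apply, Pi.zero_apply]
    generalize a i = A; generalize x i = X; generalize y i = Y
    generalize a j = A'; generalize x j = X'; generalize y j = Y'
    revert A X Y A' X' Y'; decide

/-- Functions of algebraic degree at most 2 have vanishing third-order differences. -/
lemma thirdDer (g : BV 4 → ZMod 2) (hdeg : algDeg g ≤ 2) (a x y : BV 4) :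
    g (a + x + y) + g (a + x) + g (a + y) + g (x + y) + g a + g x + g y + g 0 = 0 := by
  have hc : ∀ S : Finset (Fin 4), 3 ≤ S.card →
      (∑ z ∈ Finset.univ.filter (fun z : BV 4 => ∀ i, z i ≠ 0 → i ∈ S), g z) = 0 := by
    intro S hS
    by_contra hne
    have hmem : S ∈ Finset.univ.filter fun S : Finset (Fin 4) =>
        (∑ z ∈ Finset.univ.filter (fun z : BV 4 => ∀ i, z i ≠ 0 → i ∈ S), g z) ≠ 0 := by
      simp [hne]
    have h2 : S.card ≤ algDeg g := by
      unfold algDeg; exact Finset.le_sup hmem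
    omega
  have e := fun z => (inv4 g z).symm
  rw [e (a+x+y), e (a+x), e (a+y), e (x+y), e a, e x, e y, e 0]
  rw [← Finset.sum_add_distrib, ← Finset.sum_add_distrib, ← Finset.sum_add_distrib,
    ← Finset.sum_add_distrib, ← Finset.sum_add_distrib, ← Finset.sum_add_distrib,
    ← Finset.sum_add_distrib]
  apply Finset.sum_eq_zero
  intro S _
  by_cases hS : S.card ≤ 2
  · have hm := Mzero S hS a x y
    set c := (∑ z ∈ Finset.univ.filter (fun z : BV 4 => ∀ i, z i ≠ 0 → i ∈ S), g z)
    have : c * ((∏ i ∈ S, (a + x + y) i) + (∏ i ∈ S, (a + x) i) + (∏ i ∈ S, (a + y) i)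
      + (∏ i ∈ S, (x + y) i) + (∏ i ∈ S, a i) + (∏ i ∈ S, x i) + (∏ i ∈ S, y i)
      + (∏ i ∈ S, (0 : BV 4) i)) = 0 := by rw [hm, mul_zero]
    rw [← this]; ring
  · rw [hc S (by omega)]; ring

/-- A balanced function of degree at most 2 has a nonzero linear structure. -/
lemma linStruct (g : BV 4 → ZMod 2)
    (hbal : ∑ x : BV 4, eps (g x) = 0)
    (hT : ∀ a x y : BV 4,
      g (a + x + y) + g (a + x) + g (a + y) + g (x + y) + g a + g x + g y + g 0 = 0) :
    ∃ a : BV 4, a ≠ 0 ∧ ∀ x, g (x + a) + g x = g a + g 0 := by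
  have h2 : (2 : ZMod 2) = 0 := rfl
  by_contra hno
  push_neg at hno
  set β : BV 4 → BV 4 → ZMod 2 := fun t x => g (x + t) + g x + g t + g 0 with hβ
  have beta_add : ∀ t x x₀ : BV 4, β t (x + x₀) = β t x + β t x₀ := by
    intro t x x₀
    have h := hT x x₀ t
    simp only [hβ]
    linear_combination h - (g t + g 0 + g (x + t) + g x + g (x₀ + t) + g x₀) * h2
  have beta_witness : ∀ t : BV 4, t ≠ 0 → ∃ x₀, β t x₀ = 1 := by
    intro t ht
    obtain ⟨x₀, hx₀⟩ := hno t ht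
    refine ⟨x₀, ?_⟩
    have : ∀ p q r s : ZMod 2, p + q ≠ r + s → p + q + r + s = 1 := by decide
    exact this _ _ _ _ hx₀
  have Q1 : ∑ t : BV 4, ∑ x : BV 4, eps (g x) * eps (g (x + t)) = 0 := by
    rw [Finset.sum_comm]
    apply Finset.sum_eq_zero
    intro x _
    have : ∑ t : BV 4, eps (g (x + t)) = ∑ u : BV 4, eps (g u) :=
      Equiv.sum_comp (Equiv.addLeft x) (fun u => eps (g u))
    rw [← Finset.mul_sum, this, hbal, mul_zero]
  have Q2 : ∑ t : BV 4, ∑ x : BV 4, eps (g x) * eps (g (x + t)) = 16 := by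
    have inner : ∀ t : BV 4, ∑ x : BV 4, eps (g x) * eps (g (x + t))
        = eps (g t + g 0) * ∑ x : BV 4, eps (β t x) := by
      intro t
      rw [Finset.mul_sum]
      apply Finset.sum_congr rfl
      intro x _
      have e1 : g (x + t) = β t x + g x + g t + g 0 := by
        simp only [hβ]; linear_combination -(g x + g t + g 0) * h2
      rw [e1]
      have : ∀ A B C D : ZMod 2, eps A * eps (B + A + C + D) = eps (C + D) * eps B := by decide
      exact this _ _ _ _
    simp_rw [inner]
    rw [Finset.sum_eq_single_of_mem 0 (Finset.mem_univ 0)]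
    · have b0 : ∀ x : BV 4, β 0 x = 0 := by
        intro x; simp only [hβ, add_zero]; linear_combination (g x + g 0) * h2
      simp_rw [b0]
      have hg0 : g 0 + g 0 = 0 := by linear_combination g 0 * h2
      rw [hg0]
      have : eps 0 = 1 := by decide
      simp [this]
    · intro t _ ht
      obtain ⟨x₀, hx₀⟩ := beta_witness t ht
      have pair : ∑ x : BV 4, eps (β t x) = ∑ x : BV 4, eps (β t (x + x₀)) :=
        (Equiv.sum_comp (Equiv.addRight x₀) (fun x => eps (β t x))).symm
      simp_rw [beta_add, hx₀] at pair
      have e2 : ∀ A : ZMod 2, eps (A + 1) = -eps A := by decide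
      simp_rw [e2, Finset.sum_neg_distrib] at pair
      have : ∑ x : BV 4, eps (β t x) = 0 := by linarith
      rw [this, mul_zero]
  rw [Q1] at Q2
  norm_num at Q2

lemma sum_coord (i : Fin 4) : ∑ y : BV 4, y i = 0 := by revert i; decide

lemma sum_dotp_zero (v : BV 4) : ∑ y : BV 4, dotp v y = 0 := by
  unfold dotp
  rw [Finset.sum_comm]
  apply Finset.sum_eq_zero
  intro i _
  rw [← Finset.mul_sum, sum_coord, mul_zero]

/-- A weakly APN permutation `f` of `F_2^4` with `n_3(f) = 14` has `n̂(f) = 1`. -/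
theorem stmt_19 (f : BV 4 → BV 4) (hperm : Function.Bijective f) (h : WeakAPN f)
    (h3 : n3 f = 14) :
    nhat f = 1 := by
  classical
  -- reindexing along the permutation f
  have hre : ∀ F : BV 4 → ℤ, ∑ x : BV 4, F (f x) = ∑ y : BV 4, F y := fun F =>
    Equiv.sum_comp (Equiv.ofBijective f hperm) F
  have hre2 : ∀ F : BV 4 → ZMod 2, ∑ x : BV 4, F (f x) = ∑ y : BV 4, F y := fun F =>
    Equiv.sum_comp (Equiv.ofBijective f hperm) F
  -- find a nonzero component of degree ≤ 2
  have hc14 : (Finset.univ.filter fun v : BV 4 =>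
      v ≠ 0 ∧ algDeg (fun x => dotp v (f x)) = 3).card = 14 := by
    unfold n3 at h3
    rw [Nat.card_eq_fintype_card, Fintype.card_subtype] at h3
    exact h3
  have hc15 : (Finset.univ.filter fun v : BV 4 => v ≠ 0).card = 15 := by decide
  have hex : ∃ v₀ : BV 4, v₀ ≠ 0 ∧ algDeg (fun x => dotp v₀ (f x)) ≠ 3 := by
    by_contra hno
    push_neg at hno
    have : (Finset.univ.filter fun v : BV 4 =>
        v ≠ 0 ∧ algDeg (fun x => dotp v (f x)) = 3)
        = (Finset.univ.filter fun v : BV 4 => v ≠ 0) := by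
      apply Finset.filter_congr
      intro v _
      constructor
      · rintro ⟨hv, _⟩; exact hv
      · intro hv; exact ⟨hv, hno v hv⟩
    rw [this, hc15] at hc14
    omega
  obtain ⟨v₀, hv₀, hd3⟩ := hex
  set g : BV 4 → ZMod 2 := fun x => dotp v₀ (f x) with hg
  -- g has degree ≤ 3
  have hdle3 : algDeg g ≤ 3 := by
    unfold algDeg
    apply Finset.sup_le
    intro S hS
    rw [Finset.mem_filter] at hS
    by_contra hgt
    push_neg at hgt
    have hS4 : S.card = 4 := by
      have := Finset.card_le_univ S
      simp at this
      omega
    have hSuniv : S = Finset.univ := Finset.eq_univ_of_card S (by simpa using hS4)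
    apply hS.2
    subst hSuniv
    have hfil : (Finset.univ.filter (fun x : BV 4 => ∀ i, x i ≠ 0 → i ∈ (Finset.univ : Finset (Fin 4)))) = Finset.univ := by
      apply Finset.filter_true_of_mem
      intro x _ i _
      exact Finset.mem_univ i
    rw [hfil]
    calc ∑ x : BV 4, g x = ∑ y : BV 4, dotp v₀ y := hre2 (fun y => dotp v₀ y)
    _ = 0 := sum_dotp_zero v₀
  have hdle2 : algDeg g ≤ 2 := by omega
  -- g is balanced
  have hbal : ∑ x : BV 4, eps (g x) = 0 := by
    calc ∑ x : BV 4, eps (g x) = ∑ y : BV 4, eps (dotp v₀ y) := hre (fun y => eps (dotp v₀ y))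
    _ = 0 := sum_eps_dotp v₀ hv₀
  -- linear structure
  obtain ⟨a₀, ha₀, hlin⟩ := linStruct g hbal (thirdDer g hdle2)
  have hconst : ∀ x, dotp v₀ (der f a₀ x) = g a₀ + g 0 := by
    intro x
    have : der f a₀ x = f (x + a₀) + f x := rfl
    rw [this, dotp_add_right]
    exact hlin x
  -- conclude
  unfold nhat
  apply le_antisymm
  · apply Finset.sup_le
    intro a hamem
    rw [Finset.mem_filter] at hamem
    have hss : Subsingleton {v : BV 4 // v ≠ 0 ∧ ∃ c, ∀ x, dotp v (der f a x) = c} :=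
      ⟨fun ⟨v, hv⟩ ⟨w, hw⟩ => Subtype.ext (upper f h a hamem.2 v w hv hw)⟩
    rw [Nat.card_eq_fintype_card]
    exact Fintype.card_le_one_iff_subsingleton.mpr hss
  · have hne : Nonempty {v : BV 4 // v ≠ 0 ∧ ∃ c, ∀ x, dotp v (der f a₀ x) = c} :=
      ⟨⟨v₀, hv₀, ⟨g a₀ + g 0, hconst⟩⟩⟩
    have hpos : 0 < Nat.card {v : BV 4 // v ≠ 0 ∧ ∃ c, ∀ x, dotp v (der f a₀ x) = c} :=
      Nat.card_pos
    have hmem : a₀ ∈ Finset.univ.filter fun a : BV 4 => a ≠ 0 := by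
      simp [ha₀]
    exact le_trans (by omega) (Finset.le_sup hmem)
end
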